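/- arXiv:1211.3950 — 2 statements merged into one kernel-verified Lean document; each statement's English description precedes it below -/
import Mathlib

section
/- Suppose h* ∈ Λ₀ solves the variational inequality: for every h ∈ Λ₀, ∑_{p∈P} ∫_{t₀}^{t_f} c_p(t)·(h_p(t) − h*_p(t)) dt ≥ 0. Then ∑_{p∈P} ∫_{t₀}^{t_f} c_p(t)·h*_p(t) dt = ∑_{w∈W} v_w·Q_w, and for every w ∈ W and every p ∈ P_w, h*_p(t)·(c_p(t) − v_w) = 0 for almost every t ∈ [t₀,t_f]; that is, flow departs only at times at which the effective delay equals the minimal value v_w (dynamic user equilibrium condition). -/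
/-!
The variational inequality says that `h*` minimises the cost `h ↦ ∑ₚ ∫ cₚ hₚ` over `Λ₀`.
Writing `cₚ = v_w + (cₚ - v_w)` for `p ∈ P_w`, the cost of `h*` is `∑_w v_w Q_w` plus the gap
`∑ₚ ∫ (cₚ - v_w) h*ₚ`, whose integrands are a.e. nonnegative since `v_w` is an essential lower
bound of the delays on `P_w`. Conversely, for each `ε > 0` some path of every `P_w` has delay
below `v_w + ε` on a set of positive measure, and spreading `Q_w` uniformly over that set gives a
feasible flow of cost at most `∑_w (v_w + ε) Q_w`; so the gap is at most `ε ∑_w Q_w`. Hence the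
gap vanishes, and with it each nonnegative integrand almost everywhere.
-/

open MeasureTheory Filter Finset

section

variable {α : Type*} [MeasurableSpace α] {μ : Measure α}

theorem measure_setOf_lt_essInf_add_ne_zero [NeZero μ] {f : α → ℝ} {M ε : ℝ}
    (hf : ∀ᵐ t ∂μ, f t ≤ M) (hε : 0 < ε) : μ {t | f t < essInf f μ + ε} ≠ 0 := by
  intro hnull
  have hle : ∀ᵐ t ∂μ, essInf f μ + ε ≤ f t := by
    simpa only [ae_iff, not_le] using hnull
  have := le_essInf_of_ae_le _ hle (isCoboundedUnder_ge_of_eventually_le _ hf)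
  linarith

theorem exists_measure_setOf_lt_ne_zero_of_iInf {ι : Type*} [Finite ι] [Nonempty ι]
    {c : ι → α → ℝ} {a : ℝ} (h : μ {t | ⨅ i, c i t < a} ≠ 0) :
    ∃ i, μ {t | c i t < a} ≠ 0 := by
  by_contra! hnull
  refine h (measure_mono_null (fun t ht => ?_) (measure_iUnion_null_iff.2 hnull))
  obtain ⟨i, hi⟩ := exists_lt_of_ciInf_lt (show ⨅ i, c i t < a from ht)
  exact Set.mem_iUnion.2 ⟨i, hi⟩

theorem integral_mul_indicator_const_le [IsFiniteMeasure μ] {f : α → ℝ} {A : Set α} {a k : ℝ}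
    (hf : Integrable f μ) (hA : MeasurableSet A) (hk : 0 ≤ k) (hfa : ∀ t ∈ A, f t ≤ a) :
    ∫ t, f t * A.indicator (fun _ => k) t ∂μ ≤ a * ∫ t, A.indicator (fun _ => k) t ∂μ := by
  rw [← integral_const_mul]
  refine integral_mono ?_ ((integrable_const k).indicator hA |>.const_mul a) fun t => ?_
  · simp_rw [← Set.indicator_mul_right]
    exact (hf.mul_const k).indicator hA
  · by_cases ht : t ∈ A
    · simp only [Set.indicator_of_mem ht]
      exact mul_le_mul_of_nonneg_right (hfa t ht) hk
    · simp only [Set.indicator_of_notMem ht, mul_zero, le_refl]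

theorem MeasureTheory.Integrable.bdd_mul_of_abs_le {f g : α → ℝ} {M : ℝ} (hg : Integrable g μ)
    (hf : AEStronglyMeasurable f μ) (hfM : ∀ᵐ t ∂μ, |f t| ≤ M) :
    Integrable (fun t => f t * g t) μ :=
  hg.bdd_mul hf (by simpa only [Real.norm_eq_abs] using hfM)

theorem nonpos_of_forall_pos_le_mul {x S : ℝ} (h : ∀ ε > 0, x ≤ ε * S) : x ≤ 0 := by
  have hlim : Tendsto (fun ε => ε * S) (nhdsWithin 0 (Set.Ioi 0)) (nhds 0) := by
    simpa only [zero_mul] using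
      ((continuous_mul_const S).tendsto 0).mono_left nhdsWithin_le_nhds
  exact ge_of_tendsto hlim (eventually_nhdsWithin_of_forall h)

end

section

variable {α P W : Type*} [MeasurableSpace α] {μ : Measure α}
  {π : P → W} {Q : W → ℝ} {c : P → α → ℝ}

noncomputable def minCost (μ : Measure α) (π : P → W) (c : P → α → ℝ) (w : W) : ℝ :=
  essInf (fun t => ⨅ p : {p : P // π p = w}, c p.1 t) μ

theorem minCost_le_ae [Finite P] {M : ℝ} (hc : ∀ p, ∀ᵐ t ∂μ, |c p t| ≤ M) (p : P) :
    ∀ᵐ t ∂μ, minCost μ π c (π p) ≤ c p t := by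
  have : Nonempty {q : P // π q = π p} := ⟨⟨p, rfl⟩⟩
  have hbdd : IsBoundedUnder (· ≥ ·) (ae μ) fun t => ⨅ q : {q : P // π q = π p}, c q.1 t := by
    refine ⟨-M, eventually_map.2 ?_⟩
    filter_upwards [ae_all_iff.2 hc] with t ht
    exact le_ciInf fun q => (abs_le.1 (ht q.1)).1
  filter_upwards [ae_essInf_le hbdd] with t ht
  exact ht.trans (ciInf_le (Finite.bddBelow_range _) (⟨p, rfl⟩ : {q : P // π q = π p}))

theorem exists_measure_setOf_lt_minCost_add_ne_zero [Finite P] [NeZero μ]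
    {M : ℝ} (hc : ∀ p, ∀ᵐ t ∂μ, |c p t| ≤ M) {w : W} (hw : ∃ p, π p = w) {ε : ℝ} (hε : 0 < ε) :
    ∃ p, π p = w ∧ μ {t | c p t < minCost μ π c w + ε} ≠ 0 := by
  obtain ⟨p₀, rfl⟩ := hw
  have : Nonempty {q : P // π q = π p₀} := ⟨⟨p₀, rfl⟩⟩
  have hle : ∀ᵐ t ∂μ, ⨅ q : {q : P // π q = π p₀}, c q.1 t ≤ M := by
    filter_upwards [hc p₀] with t ht
    exact (ciInf_le (Finite.bddBelow_range _) (⟨p₀, rfl⟩ : {q : P // π q = π p₀})).trans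
      (abs_le.1 ht).2
  obtain ⟨⟨p, hp⟩, hpos⟩ :=
    exists_measure_setOf_lt_ne_zero_of_iInf (measure_setOf_lt_essInf_add_ne_zero hle hε)
  exact ⟨p, hp, hpos⟩

def IsFeasibleFlow [Fintype P] [DecidableEq W] (μ : Measure α) (π : P → W) (Q : W → ℝ)
    (h : P → α → ℝ) : Prop :=
  (∀ p, MemLp (h p) 2 μ) ∧ (∀ p, ∀ᵐ t ∂μ, 0 ≤ h p t) ∧
    ∀ w, ∑ p ∈ univ.filter (fun p => π p = w), ∫ t, h p t ∂μ = Q w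

namespace IsFeasibleFlow

variable [Fintype P] [DecidableEq W] {h : P → α → ℝ}

theorem integrable [IsFiniteMeasure μ] (hh : IsFeasibleFlow μ π Q h) (p : P) :
    Integrable (h p) μ :=
  (hh.1 p).integrable one_le_two

theorem demand_nonneg (hh : IsFeasibleFlow μ π Q h) (w : W) : 0 ≤ Q w :=
  hh.2.2 w ▸ sum_nonneg fun p _ => integral_nonneg_of_ae (hh.2.1 p)

theorem sum_mul_integral_eq [Fintype W] (hh : IsFeasibleFlow μ π Q h) (a : W → ℝ) :
    ∑ p, a (π p) * ∫ t, h p t ∂μ = ∑ w, a w * Q w := by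
  rw [← sum_fiberwise univ π]
  refine sum_congr rfl fun w _ => ?_
  rw [← hh.2.2 w, mul_sum]
  exact sum_congr rfl fun p hp => by rw [(mem_filter.1 hp).2]

theorem integrable_sub_minCost_mul [IsFiniteMeasure μ] {M : ℝ} (hh : IsFeasibleFlow μ π Q h)
    (hc_meas : ∀ p, Measurable (c p)) (hc_bdd : ∀ p, ∀ᵐ t ∂μ, |c p t| ≤ M) (p : P) :
    Integrable (fun t => (c p t - minCost μ π c (π p)) * h p t) μ := by
  simp_rw [sub_mul]
  exact ((hh.integrable p).bdd_mul_of_abs_le (hc_meas p).aestronglyMeasurable (hc_bdd p)).sub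
    ((hh.integrable p).const_mul _)

end IsFeasibleFlow

section ConcentratedFlow

variable [DecidableEq P] [IsFiniteMeasure μ] {s : W → P} {A : W → Set α}

noncomputable def concentratedFlow (μ : Measure α) (π : P → W) (Q : W → ℝ) (s : W → P)
    (A : W → Set α) (p : P) : α → ℝ :=
  if s (π p) = p then (A (π p)).indicator fun _ => Q (π p) / μ.real (A (π p)) else 0

theorem integral_concentratedFlow_self (hA : ∀ w, MeasurableSet (A w)) (hA₀ : ∀ w, μ (A w) ≠ 0)
    (hs : ∀ w, π (s w) = w) (w : W) :
    ∫ t, concentratedFlow μ π Q s A (s w) t ∂μ = Q w := by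
  have hμA : μ.real (A w) ≠ 0 := (measureReal_ne_zero_iff (measure_ne_top μ _)).2 (hA₀ w)
  simp only [concentratedFlow, hs w, if_true, integral_indicator_const _ (hA w), smul_eq_mul,
    mul_div_cancel₀ _ hμA]

theorem isFeasibleFlow_concentratedFlow [Fintype P] [DecidableEq W] (hQ : ∀ w, 0 ≤ Q w)
    (hA : ∀ w, MeasurableSet (A w)) (hA₀ : ∀ w, μ (A w) ≠ 0) (hs : ∀ w, π (s w) = w) :
    IsFeasibleFlow μ π Q (concentratedFlow μ π Q s A) := by
  refine ⟨fun p => ?_, fun p => .of_forall fun t => ?_, fun w => ?_⟩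
  · unfold concentratedFlow
    split_ifs
    · exact memLp_indicator_const 2 (hA _) _ (Or.inr (measure_ne_top μ _))
    · exact MemLp.zero
  · unfold concentratedFlow
    split_ifs
    · exact Set.indicator_nonneg (fun _ _ => div_nonneg (hQ _) measureReal_nonneg) t
    · exact le_rfl
  · rw [sum_eq_single_of_mem (s w) (mem_filter.2 ⟨mem_univ _, hs w⟩),
      integral_concentratedFlow_self hA hA₀ hs]
    intro p hp hne
    have hsp : s (π p) ≠ p := by rw [(mem_filter.1 hp).2]; exact hne.symm
    simp only [concentratedFlow, hsp, if_false, Pi.zero_apply, integral_zero]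

theorem sum_integral_mul_concentratedFlow_le [Fintype P] [DecidableEq W] [Fintype W]
    {a : W → ℝ} (hc : ∀ p, Integrable (c p) μ) (hQ : ∀ w, 0 ≤ Q w)
    (hA : ∀ w, MeasurableSet (A w)) (hA₀ : ∀ w, μ (A w) ≠ 0) (hs : ∀ w, π (s w) = w) (hca : ∀ w, ∀ t ∈ A w, c (s w) t ≤ a w) :
    ∑ p, ∫ t, c p t * concentratedFlow μ π Q s A p t ∂μ ≤ ∑ w, a w * Q w := by
  rw [← (isFeasibleFlow_concentratedFlow hQ hA hA₀ hs).sum_mul_integral_eq a]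
  refine sum_le_sum fun p _ => ?_
  unfold concentratedFlow
  split_ifs with hsp
  · exact integral_mul_indicator_const_le (hc _) (hA _) (div_nonneg (hQ _) measureReal_nonneg)
      fun t ht => by simpa only [hsp] using hca (π p) t ht
  · simp only [Pi.zero_apply, mul_zero, integral_zero, le_refl]

end ConcentratedFlow

section Equilibrium

variable [Fintype P] [Fintype W] [DecidableEq W] [IsFiniteMeasure μ] {M : ℝ}
  {hstar : P → α → ℝ}

theorem sum_integral_mul_eq_add_sum_minCost_mul (hc_meas : ∀ p, Measurable (c p))
    (hc_bdd : ∀ p, ∀ᵐ t ∂μ, |c p t| ≤ M) (hh : IsFeasibleFlow μ π Q hstar) :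
    ∑ p, ∫ t, c p t * hstar p t ∂μ =
      ∑ p, ∫ t, (c p t - minCost μ π c (π p)) * hstar p t ∂μ + ∑ w, minCost μ π c w * Q w := by
  rw [← hh.sum_mul_integral_eq, ← sum_add_distrib]
  refine sum_congr rfl fun p _ => ?_
  rw [← integral_const_mul, ← integral_add (hh.integrable_sub_minCost_mul hc_meas hc_bdd p)
    ((hh.integrable p).const_mul _)]
  simp_rw [sub_mul, sub_add_cancel]

theorem sum_integral_mul_le_of_variationalInequality [NeZero μ] (hπ : ∀ w, ∃ p, π p = w)
    (hc_meas : ∀ p, Measurable (c p)) (hc_bdd : ∀ p, ∀ᵐ t ∂μ, |c p t| ≤ M)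
    (hh : IsFeasibleFlow μ π Q hstar)
    (hVI : ∀ h, IsFeasibleFlow μ π Q h → 0 ≤ ∑ p, ∫ t, c p t * (h p t - hstar p t) ∂μ)
    {ε : ℝ} (hε : 0 < ε) :
    ∑ p, ∫ t, c p t * hstar p t ∂μ ≤ ∑ w, (minCost μ π c w + ε) * Q w := by
  classical
  choose s hs hA₀ using fun w => exists_measure_setOf_lt_minCost_add_ne_zero hc_bdd (hπ w) hε
  set A : W → Set α := fun w => {t | c (s w) t < minCost μ π c w + ε}
  have hA : ∀ w, MeasurableSet (A w) := fun w => measurableSet_lt (hc_meas _) measurable_const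
  set u := concentratedFlow μ π Q s A
  have hu : IsFeasibleFlow μ π Q u := isFeasibleFlow_concentratedFlow hh.demand_nonneg hA hA₀ hs
  have hc_mul : ∀ p {f : α → ℝ}, Integrable f μ → Integrable (fun t => c p t * f t) μ :=
    fun p _ hf => hf.bdd_mul_of_abs_le (hc_meas p).aestronglyMeasurable (hc_bdd p)
  have hdiff : ∑ p, ∫ t, c p t * (u p t - hstar p t) ∂μ =
      ∑ p, ∫ t, c p t * u p t ∂μ - ∑ p, ∫ t, c p t * hstar p t ∂μ := by
    rw [← sum_sub_distrib]
    refine sum_congr rfl fun p _ => ?_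
    simp_rw [mul_sub]
    exact integral_sub (hc_mul p (hu.integrable p)) (hc_mul p (hh.integrable p))
  have hcost : ∑ p, ∫ t, c p t * u p t ∂μ ≤ ∑ w, (minCost μ π c w + ε) * Q w := by
    refine sum_integral_mul_concentratedFlow_le (fun p => ?_) hh.demand_nonneg hA hA₀ hs
      fun w t ht => le_of_lt ht
    simpa only [mul_one] using hc_mul p (integrable_const 1)
  linarith [hVI u hu]

theorem sum_integral_mul_eq_and_ae_complementary [NeZero μ] (hπ : ∀ w, ∃ p, π p = w)
    (hc_meas : ∀ p, Measurable (c p)) (hc_bdd : ∀ p, ∀ᵐ t ∂μ, |c p t| ≤ M)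
    (hh : IsFeasibleFlow μ π Q hstar)
    (hVI : ∀ h, IsFeasibleFlow μ π Q h → 0 ≤ ∑ p, ∫ t, c p t * (h p t - hstar p t) ∂μ) :
    ∑ p, ∫ t, c p t * hstar p t ∂μ = ∑ w, minCost μ π c w * Q w ∧
      ∀ p, ∀ᵐ t ∂μ, hstar p t * (c p t - minCost μ π c (π p)) = 0 := by
  set gap : P → α → ℝ := fun p t => (c p t - minCost μ π c (π p)) * hstar p t
  have hsplit := sum_integral_mul_eq_add_sum_minCost_mul hc_meas hc_bdd hh
  have hgap_nonneg : ∀ p, 0 ≤ᵐ[μ] gap p := fun p => by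
    filter_upwards [minCost_le_ae hc_bdd p, hh.2.1 p] with t hv hp
    exact mul_nonneg (sub_nonneg.2 hv) hp
  have hsum_gap : ∑ p, ∫ t, gap p t ∂μ = 0 := by
    refine le_antisymm (nonpos_of_forall_pos_le_mul (S := ∑ w, Q w) fun ε hε => ?_)
      (sum_nonneg fun p _ => integral_nonneg_of_ae (hgap_nonneg p))
    have := sum_integral_mul_le_of_variationalInequality hπ hc_meas hc_bdd hh hVI hε
    simp only [add_mul, sum_add_distrib, ← mul_sum] at this
    linarith
  refine ⟨by linarith, fun p => ?_⟩
  have hgap_p : ∫ t, gap p t ∂μ = 0 :=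
    (sum_eq_zero_iff_of_nonneg fun q _ => integral_nonneg_of_ae (hgap_nonneg q)).1 hsum_gap p
      (mem_univ p)
  have hgap_int := hh.integrable_sub_minCost_mul hc_meas hc_bdd p
  filter_upwards [(integral_eq_zero_iff_of_nonneg_ae (hgap_nonneg p) hgap_int).1 hgap_p] with t ht
  exact (mul_comm _ _).trans ht

end Equilibrium

end

theorem variational_inequality_implies_due_general
    (t₀ tf : ℝ) (htt : t₀ < tf)
    (W : Type) [Fintype W] [DecidableEq W]
    (P : Type) [Fintype P]
    (π : P → W) (hπ : ∀ w : W, ∃ p : P, π p = w)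
    (c : P → ℝ → ℝ)
    (hc_meas : ∀ p, Measurable (c p))
    (hc_bdd : ∀ p, ∃ M : ℝ, ∀ t ∈ Set.Icc t₀ tf, |c p t| ≤ M)
    (Q : W → ℝ)
    (v : W → ℝ)
    (hv : ∀ w, v w =
      essInf (fun t => ⨅ p : {p : P // π p = w}, c p.1 t)
        (volume.restrict (Set.Icc t₀ tf)))
    (Λ₀ : (P → ℝ → ℝ) → Prop)
    (hΛ₀ : ∀ h : P → ℝ → ℝ, Λ₀ h ↔
      ((∀ p, MemLp (h p) 2 (volume.restrict (Set.Icc t₀ tf))) ∧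
       (∀ p, ∀ᵐ t ∂(volume.restrict (Set.Icc t₀ tf)), 0 ≤ h p t) ∧
       (∀ w, ∑ p ∈ Finset.univ.filter (fun p => π p = w),
          ∫ t in t₀..tf, h p t = Q w)))
    (hstar : P → ℝ → ℝ) (hstar_feas : Λ₀ hstar)
    (hVI : ∀ h : P → ℝ → ℝ, Λ₀ h →
      0 ≤ ∑ p : P, ∫ t in t₀..tf, c p t * (h p t - hstar p t)) :
    (∑ p : P, ∫ t in t₀..tf, c p t * hstar p t) = (∑ w : W, v w * Q w) ∧
    (∀ w : W, ∀ p : P, π p = w →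
      ∀ᵐ t ∂(volume.restrict (Set.Icc t₀ tf)),
        hstar p t * (c p t - v w) = 0) := by
  set μ := volume.restrict (Set.Icc t₀ tf)
  have : NeZero μ := ⟨by simpa [μ, Real.volume_Icc] using htt⟩
  have hint (f : ℝ → ℝ) : ∫ t in t₀..tf, f t = ∫ t, f t ∂μ := by
    rw [intervalIntegral.integral_of_le htt.le, integral_Icc_eq_integral_Ioc]
  have hΛ (h : P → ℝ → ℝ) : Λ₀ h ↔ IsFeasibleFlow μ π Q h := by
    simp only [hΛ₀, hint, IsFeasibleFlow]
  obtain ⟨M, hM⟩ : ∃ M, ∀ p, ∀ᵐ t ∂μ, |c p t| ≤ M := by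
    choose Mp hMp using hc_bdd
    obtain ⟨M, hM⟩ := Finite.bddAbove_range Mp
    exact ⟨M, fun p => (ae_restrict_mem measurableSet_Icc).mono fun t ht =>
      (hMp p t ht).trans (hM ⟨p, rfl⟩)⟩
  obtain rfl : v = minCost μ π c := funext hv
  simp only [hint] at hVI ⊢
  obtain ⟨htotal, hcompl⟩ := sum_integral_mul_eq_and_ae_complementary hπ hc_meas hM
    ((hΛ hstar).1 hstar_feas) fun h hh => hVI h ((hΛ h).2 hh)
  exact ⟨htotal, fun w p hpw => hpw ▸ hcompl p⟩

/-- If `hstar ∈ Λ₀` solves the variational inequality, then its total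
effective delay equals `∑_w v_w Q_w` and, for every OD pair `w` and path `p ∈ P_w`,
`hstar_p t * (c_p t - v_w) = 0` for a.e. `t` (the dynamic user equilibrium condition). -/
theorem variational_inequality_implies_due
    (t₀ tf : ℝ) (htt : t₀ < tf)
    (W : Type) [Fintype W] [Nonempty W] [DecidableEq W]
    (P : Type) [Fintype P]
    (π : P → W) (hπ : ∀ w : W, ∃ p : P, π p = w)
    (c : P → ℝ → ℝ)
    (hc_meas : ∀ p, Measurable (c p))
    (hc_bdd : ∀ p, ∃ M : ℝ, ∀ t ∈ Set.Icc t₀ tf, |c p t| ≤ M)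
    (Q : W → ℝ) (hQ : ∀ w, 0 < Q w)
    (v : W → ℝ)
    (hv : ∀ w, v w =
      essInf (fun t => ⨅ p : {p : P // π p = w}, c p.1 t)
        (volume.restrict (Set.Icc t₀ tf)))
    (Λ₀ : (P → ℝ → ℝ) → Prop)
    (hΛ₀ : ∀ h : P → ℝ → ℝ, Λ₀ h ↔
      ((∀ p, MemLp (h p) 2 (volume.restrict (Set.Icc t₀ tf))) ∧
       (∀ p, ∀ᵐ t ∂(volume.restrict (Set.Icc t₀ tf)), 0 ≤ h p t) ∧
       (∀ w, ∑ p ∈ Finset.univ.filter (fun p => π p = w),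
          ∫ t in t₀..tf, h p t = Q w)))
    (hstar : P → ℝ → ℝ) (hstar_feas : Λ₀ hstar)
    (hVI : ∀ h : P → ℝ → ℝ, Λ₀ h →
      0 ≤ ∑ p : P, ∫ t in t₀..tf, c p t * (h p t - hstar p t)) :
    (∑ p : P, ∫ t in t₀..tf, c p t * hstar p t) = (∑ w : W, v w * Q w) ∧
    (∀ w : W, ∀ p : P, π p = w →
      ∀ᵐ t ∂(volume.restrict (Set.Icc t₀ tf)),
        hstar p t * (c p t - v w) = 0) :=
  variational_inequality_implies_due_general t₀ tf htt W P π hπ c hc_meas hc_bdd Q v hv Λ₀ hΛ₀ hstar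
    hstar_feas hVI
end

section
/- (FIFO for linear arc delay with inhomogeneous traffic.) Define recursively: t₀ = 0, t₁ = A, τ₁(t) = t + A + B·∫₀ᵗ u(s) ds for t ∈ [t₀,t₁]; and for each k ≥ 1, t_{k+1} = τ_k(t_k) and τ_{k+1}(t) = t + A + B·∫_{τ_k⁻¹(t)}^{t} u(s) ds for t ∈ [t_k, t_{k+1}]. Then for every k ≥ 1: τ_k is well-defined, differentiable, and strictly increasing on [t_{k-1}, t_k] with τ_k′(t) > B·u(t) ≥ 0, τ_k maps [t_{k-1}, t_k] bijectively onto [t_k, t_{k+1}], and τ_{k+1}(t_k) = τ_k(t_k). Consequently the concatenated arc exit-time function τ, defined by τ(t) = τ_k(t) for t ∈ [t_{k-1}, t_k], is continuous and strictly increasing on [0, sup_k t_k); hence the first-in-first-out rule holds: for all s < t in [0, sup_k t_k), τ(s) < τ(t). -/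
/-!
If `τ_k' > B·u ≥ 0` on `[t_{k-1}, t_k]`, then `τ_k` is a strictly increasing bijection onto
`[t_k, t_{k+1}]` whose inverse `σ` has derivative `1 / τ_k' ∘ σ`, so by the chain rule
`τ_{k+1}' t = 1 + B·u t - B·u (σ t) / τ_k' (σ t) > B·u t`, because `B·u (σ t) < τ_k' (σ t)`.
Consecutive pieces agree at the breakpoints, so their concatenation is continuous and strictly
increasing on every `[0, t_k]`.
-/

open Set Filter Function Topology

theorem HasDerivWithinAt.of_local_left_inverse {𝕜 : Type*} [NontriviallyNormedField 𝕜]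
    {f g : 𝕜 → 𝕜} {f' a : 𝕜} {s t : Set 𝕜} (hg : Tendsto g (𝓝[s] a) (𝓝[t] (g a)))
    (hf : HasDerivWithinAt f f' t (g a)) (hf' : f' ≠ 0) (ha : a ∈ s)
    (hfg : ∀ᶠ y in 𝓝[s] a, f (g y) = y) : HasDerivWithinAt g f'⁻¹ s a :=
  (show HasFDerivWithinAt f
      (ContinuousLinearEquiv.unitsEquivAut 𝕜 (Units.mk0 f' hf') : 𝕜 →L[𝕜] 𝕜) t (g a) from hf)
    |>.of_local_left_inverse hg ha hfg

theorem strictMonoOn_Icc_of_hasDerivWithinAt_pos {g : ℝ → ℝ} {a b : ℝ}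
    (h : ∀ t ∈ Icc a b, ∃ d, HasDerivWithinAt g d (Icc a b) t ∧ 0 < d) :
    StrictMonoOn g (Icc a b) := by
  choose! d hd hpos using h
  exact strictMonoOn_of_hasDerivWithinAt_pos (convex_Icc a b)
    (fun t ht => (hd t ht).continuousWithinAt)
    (fun t ht => (hd t (interior_subset ht)).mono interior_subset)
    (fun t ht => hpos t (interior_subset ht))

section InverseOnIcc

variable {α δ : Type*} [ConditionallyCompleteLinearOrder α] [TopologicalSpace α] [OrderTopology α]
  [DenselyOrdered α] [LinearOrder δ] [TopologicalSpace δ] [OrderTopology δ] {g : α → δ} {a b : α}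

theorem StrictMonoOn.bijOn_Icc (hab : a ≤ b) (hc : ContinuousOn g (Icc a b))
    (hg : StrictMonoOn g (Icc a b)) : BijOn g (Icc a b) (Icc (g a) (g b)) :=
  hc.image_Icc_of_monotoneOn hab hg.monotoneOn ▸ hg.injOn.bijOn_image

theorem StrictMonoOn.continuousOn_invFunOn_Icc [Nonempty α] (hab : a ≤ b)
    (hc : ContinuousOn g (Icc a b)) (hg : StrictMonoOn g (Icc a b)) :
    ContinuousOn (invFunOn g (Icc a b)) (Icc (g a) (g b)) := by
  have hbij := hg.bijOn_Icc hab hc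
  have hmaps := hbij.surjOn.mapsTo_invFunOn
  have hright := hbij.surjOn.rightInvOn_invFunOn
  let σ : Icc (g a) (g b) → Icc a b := fun y => ⟨invFunOn g (Icc a b) y, hmaps y.2⟩
  have hσ_mono : Monotone σ := fun y y' hyy' => by
    rw [Subtype.mk_le_mk, ← hg.le_iff_le (hmaps y.2) (hmaps y'.2), hright y.2, hright y'.2]
    exact hyy'
  have hσ_surj : Surjective σ := fun s =>
    ⟨⟨g s, hbij.mapsTo s.2⟩, Subtype.ext (hg.injOn.leftInvOn_invFunOn s.2)⟩
  rw [continuousOn_iff_continuous_domRestrict]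
  exact continuous_subtype_val.comp (hσ_mono.continuous_of_surjective hσ_surj)

end InverseOnIcc

theorem StrictMonoOn.hasDerivWithinAt_invFunOn_Icc {g : ℝ → ℝ} {a b s d : ℝ} (hab : a ≤ b)
    (hc : ContinuousOn g (Icc a b)) (hg : StrictMonoOn g (Icc a b)) (hs : s ∈ Icc a b)
    (hd : HasDerivWithinAt g d (Icc a b) s) (hd0 : d ≠ 0) :
    HasDerivWithinAt (invFunOn g (Icc a b)) d⁻¹ (Icc (g a) (g b)) (g s) := by
  have hbij := hg.bijOn_Icc hab hc
  have hleft : invFunOn g (Icc a b) (g s) = s := hg.injOn.leftInvOn_invFunOn hs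
  refine HasDerivWithinAt.of_local_left_inverse ?_ (hleft ▸ hd) hd0 (hbij.mapsTo hs) ?_
  · exact (hg.continuousOn_invFunOn_Icc hab hc _ (hbij.mapsTo hs)).tendsto_nhdsWithin
      hbij.surjOn.mapsTo_invFunOn
  · filter_upwards [self_mem_nhdsWithin] with y hy using hbij.surjOn.rightInvOn_invFunOn hy

noncomputable def concatPieces {α β : Type*} [LE α] (t : ℕ → α) (f : ℕ → α → β) (r : α) : β :=
  f (sInf {j | r ≤ t (j + 1)}) r

section Concat

variable {α β : Type*} [LinearOrder α] {t : ℕ → α} {f : ℕ → α → β}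

theorem concatPieces_eqOn (ht : StrictMono t) (hf : ∀ j, f (j + 1) (t (j + 1)) = f j (t (j + 1)))
    (j : ℕ) : EqOn (concatPieces t f) (f j) (Icc (t j) (t (j + 1))) := by
  intro r hr
  have hj : j ∈ {i | r ≤ t (i + 1)} := hr.2
  have hle := Nat.sInf_le hj
  have hmem : sInf {i | r ≤ t (i + 1)} ∈ {i | r ≤ t (i + 1)} := Nat.sInf_mem ⟨j, hj⟩
  rw [concatPieces]
  generalize sInf {i | r ≤ t (i + 1)} = m at hle hmem ⊢
  rcases hle.eq_or_lt with rfl | hmj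
  · rfl
  · have htm : t (m + 1) = t j :=
      le_antisymm (ht.monotone hmj) (hr.1.trans hmem)
    have hmj' : m + 1 = j := ht.injective htm
    have hr' : r = t (m + 1) := le_antisymm hmem (htm ▸ hr.1)
    rw [← hmj', hr', hf m]

theorem strictMonoOn_concatPieces_Icc [Preorder β] (ht : StrictMono t)
    (hf : ∀ j, f (j + 1) (t (j + 1)) = f j (t (j + 1)))
    (hmono : ∀ j, StrictMonoOn (f j) (Icc (t j) (t (j + 1)))) :
    ∀ n, StrictMonoOn (concatPieces t f) (Icc (t 0) (t n))
  | 0 => by simp only [Icc_self, strictMonoOn_singleton]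
  | n + 1 => by
    rw [← Icc_union_Icc_eq_Icc (ht.monotone n.zero_le) (ht.monotone n.le_succ)]
    exact (strictMonoOn_concatPieces_Icc ht hf hmono n).union
      ((hmono n).congr (concatPieces_eqOn ht hf n).symm)
      (isGreatest_Icc (ht.monotone n.zero_le)) (isLeast_Icc (ht.monotone n.le_succ))

theorem strictMonoOn_concatPieces [Preorder β] (ht : StrictMono t)
    (hf : ∀ j, f (j + 1) (t (j + 1)) = f j (t (j + 1)))
    (hmono : ∀ j, StrictMonoOn (f j) (Icc (t j) (t (j + 1)))) :
    StrictMonoOn (concatPieces t f) {r | t 0 ≤ r ∧ ∃ n, r < t n} := by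
  rintro r ⟨h0r, -⟩ r' ⟨h0r', n, hr'n⟩ hrr'
  exact strictMonoOn_concatPieces_Icc ht hf hmono n ⟨h0r, (hrr'.trans hr'n).le⟩ ⟨h0r', hr'n.le⟩ hrr'

variable [TopologicalSpace α] [OrderTopology α] [TopologicalSpace β]

theorem continuousOn_concatPieces_Icc (ht : StrictMono t)
    (hf : ∀ j, f (j + 1) (t (j + 1)) = f j (t (j + 1)))
    (hcont : ∀ j, ContinuousOn (f j) (Icc (t j) (t (j + 1)))) :
    ∀ n, ContinuousOn (concatPieces t f) (Icc (t 0) (t n))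
  | 0 => by simp only [Icc_self, continuousOn_singleton]
  | n + 1 => by
    rw [← Icc_union_Icc_eq_Icc (ht.monotone n.zero_le) (ht.monotone n.le_succ)]
    exact (continuousOn_concatPieces_Icc ht hf hcont n).union_of_isClosed
      ((hcont n).congr (concatPieces_eqOn ht hf n)) isClosed_Icc isClosed_Icc

theorem continuousOn_concatPieces (ht : StrictMono t)
    (hf : ∀ j, f (j + 1) (t (j + 1)) = f j (t (j + 1)))
    (hcont : ∀ j, ContinuousOn (f j) (Icc (t j) (t (j + 1)))) :
    ContinuousOn (concatPieces t f) {r | t 0 ≤ r ∧ ∃ n, r < t n} := by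
  rintro r ⟨h0r, n, hrn⟩
  refine (continuousOn_concatPieces_Icc ht hf hcont n r ⟨h0r, hrn.le⟩).mono_of_mem_nhdsWithin ?_
  exact mem_nhdsWithin.2 ⟨Iio (t n), isOpen_Iio, hrn, fun y hy => ⟨hy.2.1, hy.1.le⟩⟩

end Concat

namespace LinearArc

variable (A B : ℝ) (x u : ℝ → ℝ)

noncomputable def nextExitTime (a : ℝ) (g : ℝ → ℝ) (t : ℝ) : ℝ :=
  t + A + B * (x t - x (invFunOn g (Icc a (g a)) t))

/-- `exitPiece j = (t_j, τ_{j+1})`; the domain `[t_j, t_{j+1}]` of `τ_{j+1}` ends at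
`t_{j+1} = τ_{j+1} t_j`. -/
noncomputable def exitPiece : ℕ → ℝ × (ℝ → ℝ)
  | 0 => (0, fun t => t + A + B * x t)
  | j + 1 => ((exitPiece j).2 (exitPiece j).1, nextExitTime A B x (exitPiece j).1 (exitPiece j).2)

/-- The induction invariant; `apply_apply` is also the value of the next piece at `g a`
(`nextExitTime_apply_left`), so consecutive pieces glue. -/
structure IsExitPiece (a : ℝ) (g : ℝ → ℝ) : Prop where
  lt_apply : a < g a
  apply_apply : g (g a) = g a + A + B * (x (g a) - x a)
  hasDerivWithinAt : ∀ t ∈ Icc a (g a), ∃ d, HasDerivWithinAt g d (Icc a (g a)) t ∧ B * u t < d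

variable {A B x u} {a : ℝ} {g : ℝ → ℝ}

namespace IsExitPiece

theorem continuousOn (h : IsExitPiece A B x u a g) : ContinuousOn g (Icc a (g a)) :=
  fun t ht => (h.hasDerivWithinAt t ht).choose_spec.1.continuousWithinAt

theorem strictMonoOn (h : IsExitPiece A B x u a g) (hBu : ∀ t, 0 ≤ B * u t) :
    StrictMonoOn g (Icc a (g a)) :=
  strictMonoOn_Icc_of_hasDerivWithinAt_pos fun t ht =>
    let ⟨d, hd, hlt⟩ := h.hasDerivWithinAt t ht
    ⟨d, hd, (hBu t).trans_lt hlt⟩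

theorem bijOn (h : IsExitPiece A B x u a g) (hBu : ∀ t, 0 ≤ B * u t) :
    BijOn g (Icc a (g a)) (Icc (g a) (g (g a))) :=
  (h.strictMonoOn hBu).bijOn_Icc h.lt_apply.le h.continuousOn

theorem nextExitTime_apply_left (h : IsExitPiece A B x u a g) (hBu : ∀ t, 0 ≤ B * u t) :
    nextExitTime A B x a g (g a) = g (g a) := by
  rw [nextExitTime, (h.strictMonoOn hBu).injOn.leftInvOn_invFunOn (left_mem_Icc.2 h.lt_apply.le),
    h.apply_apply]

theorem next (h : IsExitPiece A B x u a g) (hA : 0 < A) (hB : 0 ≤ B) (hu : ∀ t, 0 ≤ u t)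
    (hx : ∀ t, HasDerivAt x (u t) t) : IsExitPiece A B x u (g a) (nextExitTime A B x a g) := by
  have hBu : ∀ t, 0 ≤ B * u t := fun t => mul_nonneg hB (hu t)
  have hx_mono : Monotone x :=
    monotone_of_deriv_nonneg (fun t => (hx t).differentiableAt) fun t => (hx t).deriv ▸ hu t
  have hleft := h.nextExitTime_apply_left hBu
  refine ⟨?_, ?_, ?_⟩
  · rw [hleft, h.apply_apply]
    have := mul_nonneg hB (sub_nonneg.2 (hx_mono h.lt_apply.le))
    linarith
  · rw [hleft, nextExitTime, (h.strictMonoOn hBu).injOn.leftInvOn_invFunOn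
      (right_mem_Icc.2 h.lt_apply.le)]
  · intro t ht
    rw [hleft] at ht ⊢
    set σ := invFunOn g (Icc a (g a))
    have hσt : σ t ∈ Icc a (g a) := (h.bijOn hBu).surjOn.mapsTo_invFunOn ht
    have hgσt : g (σ t) = t := (h.bijOn hBu).surjOn.rightInvOn_invFunOn ht
    obtain ⟨d, hd, hBud⟩ := h.hasDerivWithinAt (σ t) hσt
    have hd0 : 0 < d := (hBu _).trans_lt hBud
    have hσ : HasDerivWithinAt σ d⁻¹ (Icc (g a) (g (g a))) t := hgσt ▸
      (h.strictMonoOn hBu).hasDerivWithinAt_invFunOn_Icc h.lt_apply.le h.continuousOn hσt hd hd0.ne'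
    refine ⟨1 + B * (u t - u (σ t) * d⁻¹), ?_, ?_⟩
    · exact ((hasDerivWithinAt_id t _).add_const A).add
        (((hx t).hasDerivWithinAt.sub ((hx (σ t)).comp_hasDerivWithinAt t hσ)).const_mul B)
    · have : B * u (σ t) * d⁻¹ < 1 := by rwa [← div_eq_mul_inv, div_lt_one hd0]
      linarith

end IsExitPiece

theorem isExitPiece_exitPiece (hA : 0 < A) (hB : 0 ≤ B) (hu : ∀ t, 0 ≤ u t)
    (hx : ∀ t, HasDerivAt x (u t) t) (hx0 : x 0 = 0) :
    ∀ j, IsExitPiece A B x u (exitPiece A B x j).1 (exitPiece A B x j).2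
  | 0 => by
    show IsExitPiece A B x u 0 (fun t => t + A + B * x t)
    refine ⟨by simpa [hx0] using hA, by simp [hx0], fun t _ => ⟨1 + B * u t, ?_, lt_one_add _⟩⟩
    exact (((hasDerivAt_id t).add_const A).add ((hx t).const_mul B)).hasDerivWithinAt
  | j + 1 => (isExitPiece_exitPiece hA hB hu hx hx0 j).next hA hB hu hx

end LinearArc

/-- FIFO for linear arc delay with inhomogeneous traffic: there exist
breakpoints `t₀ = 0, t₁ = A, t_{k+1} = τ_k (t_k)` and exit-time functions
`τ₁ t = t + A + B∫₀ᵗ u`, `τ_{k+1} t = t + A + B∫_{τ_k⁻¹ t}ᵗ u`, such that each `τ_k`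
is differentiable and strictly increasing on `[t_{k-1}, t_k]` with `τ_k' t > B·u t ≥ 0`,
maps `[t_{k-1}, t_k]` bijectively onto `[t_k, t_{k+1}]`, and `τ_{k+1} (t_k) = τ_k (t_k)`;
consequently the concatenated exit-time function `T` is continuous and strictly
increasing on `[0, sup_k t_k)` and the first-in-first-out rule holds there. -/
theorem fifo_linear_arc_delay
    (A B : ℝ) (hA : 0 < A) (hB : 0 < B)
    (upr utr : ℝ → ℝ) (hupr_cont : Continuous upr) (hutr_cont : Continuous utr)
    (hupr_nonneg : ∀ t, 0 ≤ upr t) (hutr_nonneg : ∀ t, 0 ≤ utr t)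
    (β : ℝ) (hβ : 1 ≤ β)
    (u : ℝ → ℝ) (hu : ∀ t, u t = upr t + β * utr t)
    (x : ℝ → ℝ) (hx : ∀ t, x t = ∫ s in (0:ℝ)..t, u s) :
    ∃ (tk : ℕ → ℝ) (τ : ℕ → ℝ → ℝ) (T : ℝ → ℝ),
      -- the recursive construction
      tk 0 = 0 ∧ tk 1 = A ∧
      (∀ t ∈ Set.Icc (tk 0) (tk 1), τ 1 t = t + A + B * x t) ∧
      (∀ k : ℕ, 1 ≤ k → tk (k + 1) = τ k (tk k)) ∧
      (∀ k : ℕ, 1 ≤ k → ∀ t ∈ Set.Icc (tk k) (tk (k + 1)),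
        ∃ s ∈ Set.Icc (tk (k - 1)) (tk k),
          τ k s = t ∧ τ (k + 1) t = t + A + B * ∫ σ in s..t, u σ) ∧
      -- properties of each exit-time function (k ≥ 1)
      (∀ k : ℕ, 1 ≤ k → ∀ t ∈ Set.Icc (tk (k - 1)) (tk k),
        ∃ d : ℝ, HasDerivWithinAt (τ k) d (Set.Icc (tk (k - 1)) (tk k)) t ∧
          B * u t < d ∧ 0 ≤ B * u t) ∧
      (∀ k : ℕ, 1 ≤ k → StrictMonoOn (τ k) (Set.Icc (tk (k - 1)) (tk k))) ∧
      (∀ k : ℕ, 1 ≤ k →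
        Set.BijOn (τ k) (Set.Icc (tk (k - 1)) (tk k)) (Set.Icc (tk k) (tk (k + 1)))) ∧
      (∀ k : ℕ, 1 ≤ k → τ (k + 1) (tk k) = τ k (tk k)) ∧
      -- the concatenated exit-time function and the FIFO rule on [0, sup_k t_k)
      (∀ k : ℕ, 1 ≤ k → ∀ s ∈ Set.Icc (tk (k - 1)) (tk k), T s = τ k s) ∧
      ContinuousOn T {r : ℝ | 0 ≤ r ∧ ∃ k : ℕ, r < tk k} ∧
      StrictMonoOn T {r : ℝ | 0 ≤ r ∧ ∃ k : ℕ, r < tk k} ∧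
      (∀ s t : ℝ, 0 ≤ s → s < t → (∃ k : ℕ, t < tk k) → T s < T t) := by
  have hu_cont : Continuous u := (funext hu : u = _) ▸ by fun_prop
  have hu0 : ∀ t, 0 ≤ u t := fun t =>
    hu t ▸ add_nonneg (hupr_nonneg t) (mul_nonneg (zero_le_one.trans hβ) (hutr_nonneg t))
  have hBu : ∀ t, 0 ≤ B * u t := fun t => mul_nonneg hB.le (hu0 t)
  have hx_deriv : ∀ t, HasDerivAt x (u t) t := fun t =>
    (funext hx : x = _) ▸ (hu_cont.integral_hasStrictDerivAt 0 t).hasDerivAt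
  have hx_sub : ∀ s t, x t - x s = ∫ σ in s..t, u σ := fun s t => by
    rw [hx, hx, intervalIntegral.integral_interval_sub_left (hu_cont.intervalIntegrable 0 t)
      (hu_cont.intervalIntegrable 0 s)]
  have hx0 : x 0 = 0 := by rw [hx, intervalIntegral.integral_same]
  have hpiece := LinearArc.isExitPiece_exitPiece hA hB.le hu0 hx_deriv hx0
  set tk := fun j => (LinearArc.exitPiece A B x j).1
  set f := fun j => (LinearArc.exitPiece A B x j).2
  have htk : StrictMono tk := strictMono_nat_of_lt_succ fun j => (hpiece j).lt_apply
  have hglue : ∀ j, f (j + 1) (tk (j + 1)) = f j (tk (j + 1)) := fun j =>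
    (hpiece j).nextExitTime_apply_left hBu
  have hbij : ∀ j, BijOn (f j) (Icc (tk j) (tk (j + 1))) (Icc (tk (j + 1)) (tk (j + 2))) :=
    fun j => by
      rw [show tk (j + 2) = f j (tk (j + 1)) from hglue j]
      exact (hpiece j).bijOn hBu
  have hmono := strictMonoOn_concatPieces htk hglue fun j => (hpiece j).strictMonoOn hBu
  have succ_cases : ∀ {P : ℕ → Prop}, (∀ j, P (j + 1)) → ∀ k, 1 ≤ k → P k := fun h k hk => by
    obtain ⟨j, rfl⟩ := Nat.exists_eq_add_of_le' hk
    exact h j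
  refine ⟨tk, fun k => f (k - 1), concatPieces tk f, rfl, by simp [tk, LinearArc.exitPiece, hx0],
    fun _ _ => rfl, succ_cases hglue, succ_cases fun j t ht => ?_, succ_cases fun j t ht => ?_,
    succ_cases fun j => (hpiece j).strictMonoOn hBu,
    succ_cases hbij, succ_cases hglue, succ_cases (concatPieces_eqOn htk hglue),
    continuousOn_concatPieces htk hglue fun j => (hpiece j).continuousOn, hmono,
    fun s t hs hst ⟨k, hk⟩ => hmono ⟨hs, k, hst.trans hk⟩ ⟨hs.trans hst.le, k, hk⟩ hst⟩
  · refine ⟨_, (hbij j).surjOn.mapsTo_invFunOn ht, (hbij j).surjOn.rightInvOn_invFunOn ht, ?_⟩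
    rw [← hx_sub]
    rfl
  · obtain ⟨d, hd, hlt⟩ := (hpiece j).hasDerivWithinAt t ht
    exact ⟨d, hd, hlt, hBu t⟩
end
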